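/- arXiv:1208.1227 — 9 statements merged into one kernel-verified Lean document; each statement's English description precedes it below -/
import Mathlib

section
/- Let y, c be rational numbers satisfying y² = −7c⁴ + 40c³ − 84c² + 80c − 28, with c ≠ 1 and c ≠ 2. Then the rational number b = c(c² + y − 2) / (2(c − 1)(c − 2)((c − 1)² + 1)) satisfies b²c⁴ − 5b²c³ + 10b²c² − 10b²c + 4b² − bc³ + 2bc + 2c² = 0. -/
/-!
Equation (2.1) is quadratic in `b`, with leading coefficient `(c - 1)(c - 2)((c - 1)² + 1)`,
linear coefficient `-c(c² - 2)` and constant term `2c²`. Its discriminant is `c²` times the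
quartic of (2.7), so on the curve it is the square `(c y)²`, and the given `b` is the root
`(c(c² - 2) + c y) / (2 (c - 1)(c - 2)((c - 1)² + 1))` of the quadratic formula.
-/

theorem eq21_lhs_eq_quadratic {K : Type*} [CommRing K] (b c : K) :
    b^2*c^4 - 5*b^2*c^3 + 10*b^2*c^2 - 10*b^2*c + 4*b^2 - b*c^3 + 2*b*c + 2*c^2
      = (c - 1)*(c - 2)*((c - 1)^2 + 1) * (b * b) + -(c*(c^2 - 2)) * b + 2*c^2 := by
  ring

theorem discrim_eq21_eq_mul_self {K : Type*} [CommRing K] (c y : K)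
    (hy : y^2 = -7*c^4 + 40*c^3 - 84*c^2 + 80*c - 28) :
    discrim ((c - 1)*(c - 2)*((c - 1)^2 + 1)) (-(c*(c^2 - 2))) (2*c^2) = (c*y) * (c*y) := by
  rw [discrim]
  linear_combination (-c^2) * hy

theorem stmt_0 (y c b : ℚ)
    (hy : y^2 = -7*c^4 + 40*c^3 - 84*c^2 + 80*c - 28)
    (hc1 : c ≠ 1) (hc2 : c ≠ 2)
    (hb : b = c*(c^2 + y - 2) / (2*(c - 1)*(c - 2)*((c - 1)^2 + 1))) :
    b^2*c^4 - 5*b^2*c^3 + 10*b^2*c^2 - 10*b^2*c + 4*b^2 - b*c^3 + 2*b*c + 2*c^2 = 0 := by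
  have hlead : (c - 1)*(c - 2)*((c - 1)^2 + 1) ≠ 0 :=
    mul_ne_zero (mul_ne_zero (sub_ne_zero.mpr hc1) (sub_ne_zero.mpr hc2)) (by positivity)
  rw [eq21_lhs_eq_quadratic,
    quadratic_eq_zero_iff hlead (discrim_eq21_eq_mul_self c y hy)]
  left
  rw [hb]
  congr 1 <;> ring
end

section
/- Let b, c be rational numbers with c ≠ 0 satisfying b²c⁴ − 5b²c³ + 10b²c² − 10b²c + 4b² − bc³ + 2bc + 2c² = 0. Then the rational number y = ((2c⁴ − 10c³ + 20c² − 20c + 8)·b − c³ + 2c) / c satisfies y² = −7c⁴ + 40c³ − 84c² + 80c − 28. -/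
theorem stmt_2 (b c y : ℚ) (hc : c ≠ 0)
    (heq : b^2*c^4 - 5*b^2*c^3 + 10*b^2*c^2 - 10*b^2*c + 4*b^2 - b*c^3 + 2*b*c + 2*c^2 = 0)
    (hy : y = ((2*c^4 - 10*c^3 + 20*c^2 - 20*c + 8)*b - c^3 + 2*c) / c) :
    y^2 = -7*c^4 + 40*c^3 - 84*c^2 + 80*c - 28 := by
  -- (2.1) is a quadratic equation in `b`, and `c * y` is `2 * a * b + β` for its coefficients,
  -- so `(c * y)^2` is its discriminant.
  set a := c^4 - 5*c^3 + 10*c^2 - 10*c + 4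
  set β := 2*c - c^3
  have hquad : a * (b * b) + β * b + 2*c^2 = 0 := by linear_combination heq
  have hdiscrim : discrim a β (2*c^2) = (c * y)^2 := by
    rw [discrim_eq_sq_of_quadratic_eq_zero hquad, hy, mul_div_cancel₀ _ hc]
    ring
  have hsq : c^2 * y^2 = c^2 * (-7*c^4 + 40*c^3 - 84*c^2 + 80*c - 28) := by
    rw [← mul_pow, ← hdiscrim, discrim]
    ring
  exact mul_left_cancel₀ (pow_ne_zero 2 hc) hsq
end

section
/- Let b, c be rational numbers satisfying 2b²c⁴ − 12b²c³ + 26b²c² − 24b²c + 8b² − bc⁴ + 3bc³ − 6bc + 4b + c³ − 2c² + 2c = 0. Then the rational number y = (4c² − 12c + 8)·b − c² + 2 satisfies y² = c⁴ − 8c³ + 12c² − 16c + 4. -/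
theorem stmt_3 (b c y : ℚ)
    (heq : 2*b^2*c^4 - 12*b^2*c^3 + 26*b^2*c^2 - 24*b^2*c + 8*b^2 - b*c^4 + 3*b*c^3 - 6*b*c
      + 4*b + c^3 - 2*c^2 + 2*c = 0)
    (hy : y = (4*c^2 - 12*c + 8)*b - c^2 + 2) :
    y^2 = c^4 - 8*c^3 + 12*c^2 - 16*c + 4 := by
  subst hy
  linear_combination 8 * heq
end

section
/- The map sending (b, c) to (y, c) with y = ((2c⁴ − 10c³ + 20c² − 20c + 8)·b − c³ + 2c)/c is a bijection from the set of rational pairs (b, c) satisfying b²c⁴ − 5b²c³ + 10b²c² − 10b²c + 4b² − bc³ + 2bc + 2c² = 0 other than (0,0), (−2,1), (2,2), onto the set of rational pairs (y, c) satisfying y² = −7c⁴ + 40c³ − 84c² + 80c − 28 other than (1,1), (−1,1), (−2,2), (2,2); its inverse sends (y, c) to (b, c) with b = c(c² + y − 2)/(2(c − 1)(c − 2)((c − 1)² + 1)). -/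
/-- Non-exceptional rational solutions of equation (2.1). -/
def sol21 : Set (ℚ × ℚ) :=
  {p | p.1^2*p.2^4 - 5*p.1^2*p.2^3 + 10*p.1^2*p.2^2 - 10*p.1^2*p.2 + 4*p.1^2
        - p.1*p.2^3 + 2*p.1*p.2 + 2*p.2^2 = 0 ∧
       p ≠ (0, 0) ∧ p ≠ (-2, 1) ∧ p ≠ (2, 2)}

/-- Non-exceptional rational points of the elliptic curve (2.7). -/
def pts27 : Set (ℚ × ℚ) :=
  {q | q.1^2 = -7*q.2^4 + 40*q.2^3 - 84*q.2^2 + 80*q.2 - 28 ∧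
       q ≠ (1, 1) ∧ q ≠ (-1, 1) ∧ q ≠ (-2, 2) ∧ q ≠ (2, 2)}

/-- The map (b, c) ↦ (y, c) of formula (2.14). -/
def map214 (p : ℚ × ℚ) : ℚ × ℚ :=
  (((2*p.2^4 - 10*p.2^3 + 20*p.2^2 - 20*p.2 + 8)*p.1 - p.2^3 + 2*p.2) / p.2, p.2)

/-- The map (y, c) ↦ (b, c) of formula (2.12). -/
def map212 (q : ℚ × ℚ) : ℚ × ℚ :=
  (q.2*(q.2^2 + q.1 - 2) / (2*(q.2 - 1)*(q.2 - 2)*((q.2 - 1)^2 + 1)), q.2)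

/-!
Viewed as a quadratic in `b`, equation (2.1) reads `D b² - (c³ - 2c) b + 2c² = 0` with leading
coefficient `D = (c - 1)(c - 2)((c - 1)² + 1)`. Completing the square gives
`(2Db - (c³ - 2c))² - c² R(c) = 4D · (2.1)`, where `R` is the right-hand side of (2.7), so
`y = (2Db - (c³ - 2c)) / c` is the square root of `R(c)` attached to a solution, and conversely
`b = c (y + c² - 2) / (2D)`. Both are well defined exactly when `c ∉ {0, 1, 2}`, and the fibres
over `c = 0, 1, 2` consist only of exceptional points.
-/

section Polynomials

variable {R : Type*} [CommRing R]

def lhs21 (b c : R) : R :=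
  b^2*c^4 - 5*b^2*c^3 + 10*b^2*c^2 - 10*b^2*c + 4*b^2 - b*c^3 + 2*b*c + 2*c^2

def rhs27 (c : R) : R :=
  -7*c^4 + 40*c^3 - 84*c^2 + 80*c - 28

def leadCoeff21 (c : R) : R :=
  (c - 1) * (c - 2) * ((c - 1) ^ 2 + 1)

theorem sq_sub_sq_mul_rhs27 (b c : R) :
    (2 * leadCoeff21 c * b - (c ^ 3 - 2 * c)) ^ 2 - c ^ 2 * rhs27 c
      = 4 * leadCoeff21 c * lhs21 b c := by
  unfold leadCoeff21 rhs27 lhs21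
  ring

end Polynomials

theorem mem_sol21 {b c : ℚ} :
    (b, c) ∈ sol21 ↔ lhs21 b c = 0 ∧ (b, c) ≠ (0, 0) ∧ (b, c) ≠ (-2, 1) ∧ (b, c) ≠ (2, 2) :=
  Iff.rfl

theorem mem_pts27 {y c : ℚ} :
    (y, c) ∈ pts27 ↔ y ^ 2 = rhs27 c ∧
      (y, c) ≠ (1, 1) ∧ (y, c) ≠ (-1, 1) ∧ (y, c) ≠ (-2, 2) ∧ (y, c) ≠ (2, 2) :=
  Iff.rfl

theorem leadCoeff21_ne_zero {c : ℚ} (h1 : c ≠ 1) (h2 : c ≠ 2) : leadCoeff21 c ≠ 0 :=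
  mul_ne_zero (mul_ne_zero (sub_ne_zero.mpr h1) (sub_ne_zero.mpr h2)) (by positivity)

theorem map214_apply (b c : ℚ) :
    map214 (b, c) = ((2 * leadCoeff21 c * b - (c ^ 3 - 2 * c)) / c, c) := by
  rw [map214, leadCoeff21]
  congr 2
  ring

theorem map212_apply (y c : ℚ) :
    map212 (y, c) = (c * (y + c ^ 2 - 2) / (2 * leadCoeff21 c), c) := by
  rw [map212, leadCoeff21]
  congr 2 <;> ring

theorem snd_ne_of_mem_sol21 {b c : ℚ} (h : (b, c) ∈ sol21) : c ≠ 0 ∧ c ≠ 1 ∧ c ≠ 2 := by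
  obtain ⟨hE, h00, h21, h22⟩ := mem_sol21.mp h
  unfold lhs21 at hE
  refine ⟨?_, ?_, ?_⟩ <;> rintro rfl
  · exact h00 (by simpa using hE)
  · exact h21 (Prod.ext (show b = -2 by linear_combination hE) rfl)
  · exact h22 (Prod.ext (show b = 2 by linear_combination -hE / 4) rfl)

theorem snd_ne_of_mem_pts27 {y c : ℚ} (h : (y, c) ∈ pts27) : c ≠ 0 ∧ c ≠ 1 ∧ c ≠ 2 := by
  obtain ⟨hy, h11, h11', h22', h22⟩ := mem_pts27.mp h
  unfold rhs27 at hy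
  refine ⟨?_, ?_, ?_⟩ <;> rintro rfl
  · nlinarith [sq_nonneg y]
  · have : (y - 1) * (y + 1) = 0 := by linear_combination hy
    rcases mul_eq_zero.mp this with h | h
    · exact h11 (Prod.ext (show y = 1 by linear_combination h) rfl)
    · exact h11' (Prod.ext (show y = -1 by linear_combination h) rfl)
  · have : (y - 2) * (y + 2) = 0 := by linear_combination hy
    rcases mul_eq_zero.mp this with h | h
    · exact h22 (Prod.ext (show y = 2 by linear_combination h) rfl)
    · exact h22' (Prod.ext (show y = -2 by linear_combination h) rfl)

theorem mapsTo_map214 : Set.MapsTo map214 sol21 pts27 := by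
  rintro ⟨b, c⟩ h
  obtain ⟨hc0, hc1, hc2⟩ := snd_ne_of_mem_sol21 h
  have hE : lhs21 b c = 0 := (mem_sol21.mp h).1
  rw [map214_apply, mem_pts27]
  refine ⟨?_, fun h => hc1 (congrArg Prod.snd h), fun h => hc1 (congrArg Prod.snd h),
    fun h => hc2 (congrArg Prod.snd h), fun h => hc2 (congrArg Prod.snd h)⟩
  rw [div_pow, div_eq_iff (pow_ne_zero 2 hc0)]
  linear_combination sq_sub_sq_mul_rhs27 b c + 4 * leadCoeff21 c * hE

theorem mapsTo_map212 : Set.MapsTo map212 pts27 sol21 := by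
  rintro ⟨y, c⟩ h
  obtain ⟨hc0, hc1, hc2⟩ := snd_ne_of_mem_pts27 h
  have hy : y ^ 2 = rhs27 c := (mem_pts27.mp h).1
  have hD := leadCoeff21_ne_zero hc1 hc2
  rw [map212_apply, mem_sol21]
  refine ⟨?_, fun h => hc0 (congrArg Prod.snd h), fun h => hc1 (congrArg Prod.snd h),
    fun h => hc2 (congrArg Prod.snd h)⟩
  set b := c * (y + c ^ 2 - 2) / (2 * leadCoeff21 c)
  have hb : 2 * leadCoeff21 c * b = c * (y + c ^ 2 - 2) :=
    mul_div_cancel₀ _ (mul_ne_zero two_ne_zero hD)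
  have h4E : 4 * leadCoeff21 c * lhs21 b c = 0 := by
    rw [← sq_sub_sq_mul_rhs27, hb]
    linear_combination c ^ 2 * hy
  exact (mul_eq_zero.mp h4E).resolve_left (mul_ne_zero four_ne_zero hD)

theorem invOn_map212_map214 : Set.InvOn map212 map214 sol21 pts27 := by
  constructor
  · rintro ⟨b, c⟩ h
    obtain ⟨hc0, hc1, hc2⟩ := snd_ne_of_mem_sol21 h
    have hD := leadCoeff21_ne_zero hc1 hc2
    rw [map214_apply, map212_apply]
    refine Prod.ext ?_ rfl
    field_simp
    ring
  · rintro ⟨y, c⟩ h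
    obtain ⟨hc0, hc1, hc2⟩ := snd_ne_of_mem_pts27 h
    have hD := leadCoeff21_ne_zero hc1 hc2
    rw [map212_apply, map214_apply]
    refine Prod.ext ?_ rfl
    field_simp
    ring

theorem stmt_4 : Set.BijOn map214 sol21 pts27 ∧ Set.InvOn map212 map214 sol21 pts27 :=
  ⟨invOn_map212_map214.bijOn mapsTo_map214 mapsTo_map212, invOn_map212_map214⟩
end

section
/- The map sending (b, c) to (y, c) with y = (4c² − 12c + 8)·b − c² + 2 is a bijection from the set of rational pairs (b, c) satisfying 2b²c⁴ − 12b²c³ + 26b²c² − 24b²c + 8b² − bc⁴ + 3bc³ − 6bc + 4b + c³ − 2c² + 2c = 0 other than (0,0) and (−1/2,0), onto the set of rational pairs (y, c) satisfying y² = c⁴ − 8c³ + 12c² − 16c + 4 other than (2,0) and (−2,0); its inverse sends (y, c) to (b, c) with b = (c² + y − 2)/(4(c − 2)(c − 1)). -/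
/-- Non-exceptional rational solutions of equation (2.2). -/
def sol22 : Set (ℚ × ℚ) :=
  {p | 2*p.1^2*p.2^4 - 12*p.1^2*p.2^3 + 26*p.1^2*p.2^2 - 24*p.1^2*p.2 + 8*p.1^2
        - p.1*p.2^4 + 3*p.1*p.2^3 - 6*p.1*p.2 + 4*p.1 + p.2^3 - 2*p.2^2 + 2*p.2 = 0 ∧
       p ≠ (0, 0) ∧ p ≠ (-1/2, 0)}

/-- Non-exceptional rational points of the elliptic curve (2.8). -/
def pts28 : Set (ℚ × ℚ) :=
  {q | q.1^2 = q.2^4 - 8*q.2^3 + 12*q.2^2 - 16*q.2 + 4 ∧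
       q ≠ (2, 0) ∧ q ≠ (-2, 0)}

/-- The map (b, c) ↦ (y, c) of formula (2.15). -/
def map215 (p : ℚ × ℚ) : ℚ × ℚ :=
  ((4*p.2^2 - 12*p.2 + 8)*p.1 - p.2^2 + 2, p.2)

/-- The map (y, c) ↦ (b, c) of formula (2.13). -/
def map213 (q : ℚ × ℚ) : ℚ × ℚ :=
  ((q.2^2 + q.1 - 2) / (4*(q.2 - 2)*(q.2 - 1)), q.2)

/-!
Since `4c² - 12c + 8 = 4(c - 1)(c - 2)`, the substitution `y = (4c² - 12c + 8) b - c² + 2` is an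
invertible affine change of the variable `b` as long as `c ∉ {1, 2}`, and it turns the left side
of (2.2) into `(y² - (c⁴ - 8c³ + 12c² - 16c + 4)) / 8`. Neither equation has a rational solution
with `c ∈ {1, 2}`, and their solutions with `c = 0` are exactly the exceptional ones.
-/

theorem map215_fst_sq_sub (b c : ℚ) :
    (map215 (b, c)).1 ^ 2 - (c^4 - 8*c^3 + 12*c^2 - 16*c + 4) =
      8 * (2*b^2*c^4 - 12*b^2*c^3 + 26*b^2*c^2 - 24*b^2*c + 8*b^2
        - b*c^4 + 3*b*c^3 - 6*b*c + 4*b + c^3 - 2*c^2 + 2*c) := by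
  simp only [map215]
  ring

theorem snd_ne_zero_one_two_of_mem_sol22 {b c : ℚ} (h : (b, c) ∈ sol22) :
    c ≠ 0 ∧ c ≠ 1 ∧ c ≠ 2 := by
  obtain ⟨he, hne, hne'⟩ := h
  refine ⟨?_, ?_, ?_⟩ <;> rintro rfl
  · have hb : b * (2*b + 1) = 0 := by linear_combination he / 4
    rcases mul_eq_zero.mp hb with hb | hb
    · exact hne (by rw [hb])
    · exact hne' (by rw [show b = -1/2 by linarith])
  · linarith
  · linarith

theorem snd_ne_zero_one_two_of_mem_pts28 {y c : ℚ} (h : (y, c) ∈ pts28) :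
    c ≠ 0 ∧ c ≠ 1 ∧ c ≠ 2 := by
  obtain ⟨he, hne, hne'⟩ := h
  refine ⟨?_, ?_, ?_⟩ <;> rintro rfl
  · have hy : (y - 2) * (y + 2) = 0 := by linear_combination he
    rcases mul_eq_zero.mp hy with hy | hy
    · exact hne (by rw [show y = 2 by linarith])
    · exact hne' (by rw [show y = -2 by linarith])
  · nlinarith [sq_nonneg y]
  · nlinarith [sq_nonneg y]

theorem map213_map215 {b c : ℚ} (h₁ : c ≠ 1) (h₂ : c ≠ 2) :
    map213 (map215 (b, c)) = (b, c) := by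
  have : (c - 2) * (c - 1) ≠ 0 := mul_ne_zero (sub_ne_zero.2 h₂) (sub_ne_zero.2 h₁)
  simp only [map213, map215, Prod.mk.injEq, and_true]
  field_simp
  ring

theorem map215_map213 {y c : ℚ} (h₁ : c ≠ 1) (h₂ : c ≠ 2) :
    map215 (map213 (y, c)) = (y, c) := by
  have : (c - 2) * (c - 1) ≠ 0 := mul_ne_zero (sub_ne_zero.2 h₂) (sub_ne_zero.2 h₁)
  simp only [map213, map215, Prod.mk.injEq, and_true]
  field_simp
  ring

theorem mapsTo_map215 : Set.MapsTo map215 sol22 pts28 := by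
  rintro ⟨b, c⟩ hp
  have hc := (snd_ne_zero_one_two_of_mem_sol22 hp).1
  refine ⟨?_, fun h ↦ hc congr($h.2), fun h ↦ hc congr($h.2)⟩
  change (map215 (b, c)).1 ^ 2 = c^4 - 8*c^3 + 12*c^2 - 16*c + 4
  linear_combination map215_fst_sq_sub b c + 8 * hp.1

theorem mapsTo_map213 : Set.MapsTo map213 pts28 sol22 := by
  rintro ⟨y, c⟩ hq
  obtain ⟨hc₀, hc₁, hc₂⟩ := snd_ne_zero_one_two_of_mem_pts28 hq
  obtain ⟨b, hb⟩ : ∃ b, map213 (y, c) = (b, c) := ⟨_, rfl⟩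
  have hid := map215_fst_sq_sub b c
  rw [← hb, map215_map213 hc₁ hc₂] at hid
  rw [hb]
  refine ⟨?_, fun h ↦ hc₀ congr($h.2), fun h ↦ hc₀ congr($h.2)⟩
  linear_combination (hq.1 - hid) / 8

theorem invOn_map213_map215 : Set.InvOn map213 map215 sol22 pts28 := by
  refine ⟨fun ⟨b, c⟩ hp ↦ ?_, fun ⟨y, c⟩ hq ↦ ?_⟩
  · obtain ⟨-, hc₁, hc₂⟩ := snd_ne_zero_one_two_of_mem_sol22 hp
    exact map213_map215 hc₁ hc₂
  · obtain ⟨-, hc₁, hc₂⟩ := snd_ne_zero_one_two_of_mem_pts28 hq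
    exact map215_map213 hc₁ hc₂

theorem stmt_5 : Set.BijOn map215 sol22 pts28 ∧ Set.InvOn map213 map215 sol22 pts28 :=
  ⟨invOn_map213_map215.bijOn mapsTo_map215 mapsTo_map213, invOn_map213_map215⟩
end

section
/- Let y, c be rational numbers with y² = −7c⁴ + 40c³ − 84c² + 80c − 28, c ≠ 1, c ≠ 2, and set b = c(c² + y − 2)/(2(c − 1)(c − 2)((c − 1)² + 1)). Assume the nondegeneracy condition (b²c⁴ − 6b²c³ + 13b²c² − 12b²c + 4b² + c²)·(bc − 1 − b)·(bc − c − 2b)·(b²c² + 2b² − 3b²c + c − bc² + 2b) ≠ 0. Then x = −1 is a root of the cubic x³ − E₁₀x² + E₂₀x − E₃₀ = 0, i.e. −1 − E₁₀ − E₂₀ − E₃₀ = 0, where E₁₀, E₂₀, E₃₀ are given by the formulas in the context. In particular this cubic polynomial is divisible by (x + 1) over ℚ. -/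
/-!
Write `S(b, c) = (c - 1)(c - 2)((c - 1)² + 1) b² - c(c² - 2) b + 2c²`.
Eliminating `y` from the parametrisation of `b`, the curve equation becomes `S(b, c) = 0`:
squaring `b · 2(c - 1)(c - 2)((c - 1)² + 1) - c(c² - 2) = c y` and using
`(c² - 2)² - y² = 8(c - 1)(c - 2)((c - 1)² + 1)` leaves `2(c - 1)(c - 2)((c - 1)² + 1) · 2S = 0`.
On the other hand, identically in `b` and `c`,
`-1 - E₁₀ - E₂₀ - E₃₀ = -S² / (2 A N P Q)`, where `A, N, P, Q` are the four nondegeneracy factors.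
-/

section
variable {K : Type*} [Field K]

def E₁₀ (b c : K) : K :=
  -(b^2*c^2 + 2*b^2 - 3*b^2*c - c) / (b^2*c^2 + 2*b^2 - 3*b^2*c + c - b*c^2 + 2*b)

def E₂₀ (b c : K) : K :=
  (b/2) * (b*c^2 - 2*c - 2*b) * (2*b*c^2 - c^2 - 6*b*c + 2 + 4*b)
    * ((b*c - 1 - b)^2)⁻¹ * ((b*c - c - 2*b)^2)⁻¹

def E₃₀ (b c : K) : K :=
  c * b^2 * (1 - c) * (c - 2) * (b*c^2 - 4*b*c + 2 + 4*b) * (2*b*c^2 - c^2 - 4*b*c + 2*b)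
    * (b^2*c^4 - 6*b^2*c^3 + 13*b^2*c^2 - 12*b^2*c + 4*b^2 + c^2)⁻¹
    * ((b*c - 1 - b)^2)⁻¹ * ((b*c - c - 2*b)^2)⁻¹

theorem quadratic_of_mem_curve {y c b : K}
    (hy : y^2 = -7*c^4 + 40*c^3 - 84*c^2 + 80*c - 28)
    (hD : 2*(c - 1)*(c - 2)*((c - 1)^2 + 1) ≠ 0)
    (hb : b = c*(c^2 + y - 2) / (2*(c - 1)*(c - 2)*((c - 1)^2 + 1))) :
    (c - 1)*(c - 2)*((c - 1)^2 + 1)*b^2 - c*(c^2 - 2)*b + 2*c^2 = 0 := by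
  have hbD : b * (2*(c - 1)*(c - 2)*((c - 1)^2 + 1)) - c*(c^2 - 2) = c*y := by
    rw [hb, div_mul_cancel₀ _ hD]; ring
  have hsq : 2*(c - 1)*(c - 2)*((c - 1)^2 + 1)
      * (2*((c - 1)*(c - 2)*((c - 1)^2 + 1)*b^2 - c*(c^2 - 2)*b + 2*c^2)) = 0 := by
    linear_combination (b*(2*(c - 1)*(c - 2)*((c - 1)^2 + 1)) - c*(c^2 - 2) + c*y) * hbD
      + c^2 * hy
  have h2 : (2 : K) ≠ 0 := left_ne_zero_of_mul (left_ne_zero_of_mul (left_ne_zero_of_mul hD))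
  exact (mul_eq_zero.mp ((mul_eq_zero.mp hsq).resolve_left hD)).resolve_left h2

theorem neg_one_sub_E₁₀_sub_E₂₀_sub_E₃₀ [NeZero (2 : K)] {b c : K}
    (hA : b^2*c^2 + 2*b^2 - 3*b^2*c + c - b*c^2 + 2*b ≠ 0)
    (hN : b^2*c^4 - 6*b^2*c^3 + 13*b^2*c^2 - 12*b^2*c + 4*b^2 + c^2 ≠ 0)
    (hP : b*c - 1 - b ≠ 0) (hQ : b*c - c - 2*b ≠ 0) :
    -1 - E₁₀ b c - E₂₀ b c - E₃₀ b c
      = -((c - 1)*(c - 2)*((c - 1)^2 + 1)*b^2 - c*(c^2 - 2)*b + 2*c^2)^2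
        / (2 * (b^2*c^2 + 2*b^2 - 3*b^2*c + c - b*c^2 + 2*b)
          * (b^2*c^4 - 6*b^2*c^3 + 13*b^2*c^2 - 12*b^2*c + 4*b^2 + c^2)
          * (b*c - 1 - b) * (b*c - c - 2*b)) := by
  unfold E₁₀ E₂₀ E₃₀
  -- as atoms, the denominators are matched against `hA hN hP hQ` by `field_simp`
  generalize hA' : b^2*c^2 + 2*b^2 - 3*b^2*c + c - b*c^2 + 2*b = A at *
  generalize hN' : b^2*c^4 - 6*b^2*c^3 + 13*b^2*c^2 - 12*b^2*c + 4*b^2 + c^2 = N at *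
  generalize hP' : b*c - 1 - b = P at *
  generalize hQ' : b*c - c - 2*b = Q at *
  field_simp
  subst hA' hN' hP' hQ'
  ring

end

theorem stmt_7 (y c b E10 E20 E30 : ℚ)
    (hy : y^2 = -7*c^4 + 40*c^3 - 84*c^2 + 80*c - 28)
    (hc1 : c ≠ 1) (hc2 : c ≠ 2)
    (hb : b = c*(c^2 + y - 2) / (2*(c - 1)*(c - 2)*((c - 1)^2 + 1)))
    (hnd : (b^2*c^4 - 6*b^2*c^3 + 13*b^2*c^2 - 12*b^2*c + 4*b^2 + c^2)
           * (b*c - 1 - b) * (b*c - c - 2*b)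
           * (b^2*c^2 + 2*b^2 - 3*b^2*c + c - b*c^2 + 2*b) ≠ 0)
    (hE10 : E10 = -(b^2*c^2 + 2*b^2 - 3*b^2*c - c)
                   / (b^2*c^2 + 2*b^2 - 3*b^2*c + c - b*c^2 + 2*b))
    (hE20 : E20 = (b/2) * (b*c^2 - 2*c - 2*b) * (2*b*c^2 - c^2 - 6*b*c + 2 + 4*b)
                   * ((b*c - 1 - b)^2)⁻¹ * ((b*c - c - 2*b)^2)⁻¹)
    (hE30 : E30 = c * b^2 * (1 - c) * (c - 2) * (b*c^2 - 4*b*c + 2 + 4*b)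
                   * (2*b*c^2 - c^2 - 4*b*c + 2*b)
                   * (b^2*c^4 - 6*b^2*c^3 + 13*b^2*c^2 - 12*b^2*c + 4*b^2 + c^2)⁻¹
                   * ((b*c - 1 - b)^2)⁻¹ * ((b*c - c - 2*b)^2)⁻¹) :
    (-1 : ℚ) - E10 - E20 - E30 = 0 := by
  have hD : (2*(c - 1)*(c - 2)*((c - 1)^2 + 1) : ℚ) ≠ 0 := by
    have hq : (c - 1)^2 + 1 ≠ (0 : ℚ) := by positivity
    exact mul_ne_zero (mul_ne_zero (mul_ne_zero two_ne_zero (sub_ne_zero.mpr hc1))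
      (sub_ne_zero.mpr hc2)) hq
  obtain ⟨hNPQ, hA⟩ := mul_ne_zero_iff.mp hnd
  obtain ⟨hNP, hQ⟩ := mul_ne_zero_iff.mp hNPQ
  obtain ⟨hN, hP⟩ := mul_ne_zero_iff.mp hNP
  rw [hE10, hE20, hE30]
  calc _ = _ := neg_one_sub_E₁₀_sub_E₂₀_sub_E₃₀ hA hN hP hQ
    _ = 0 := by rw [quadratic_of_mem_curve hy hD hb]; ring
end

section
/- Let y, c be rational numbers with y² = −7c⁴ + 40c³ − 84c² + 80c − 28, c ≠ 1, c ≠ 2, and set b = c(c² + y − 2)/(2(c − 1)(c − 2)((c − 1)² + 1)). Assume (b²c⁴ − 6b²c³ + 13b²c² − 12b²c + 4b² + c²)·(bc − 1 − b)·(bc − c − 2b) ≠ 0. Then E₀₃ = 0, where E₀₃ is given by the formula in the context; in particular d = 0 is a root of the cubic d³ − E₀₁d² + E₀₂d − E₀₃. -/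
/-!
As a polynomial in `b`, the second factor of `E₀₃` is the quadratic
`A b² + (2c - c³) b + 2c²` with leading coefficient `A = (c - 1)(c - 2)((c - 1)² + 1)`.
Its discriminant is `c² y²` exactly when `(c, y)` lies on curve (2.7), and the prescribed `b` is
the root `(c³ - 2c + c y) / (2A)` given by the quadratic formula, so that factor vanishes.
-/

section CurveRoot

variable {K : Type*} [Field K] [LinearOrder K] [IsStrictOrderedRing K]

lemma sub_one_mul_sub_two_mul_ne_zero {c : K} (hc1 : c ≠ 1) (hc2 : c ≠ 2) :
    (c - 1) * (c - 2) * ((c - 1) ^ 2 + 1) ≠ 0 :=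
  mul_ne_zero (mul_ne_zero (sub_ne_zero.2 hc1) (sub_ne_zero.2 hc2)) (by positivity)

lemma discrim_eq_of_curve {y c : K}
    (hy : y ^ 2 = -7 * c ^ 4 + 40 * c ^ 3 - 84 * c ^ 2 + 80 * c - 28) :
    discrim ((c - 1) * (c - 2) * ((c - 1) ^ 2 + 1)) (2 * c - c ^ 3) (2 * c ^ 2) =
      (c * y) * (c * y) := by
  rw [discrim]
  linear_combination (-c ^ 2) * hy

lemma quadratic_factor_eq_zero_of_curve {y c b : K}
    (hy : y ^ 2 = -7 * c ^ 4 + 40 * c ^ 3 - 84 * c ^ 2 + 80 * c - 28)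
    (hc1 : c ≠ 1) (hc2 : c ≠ 2)
    (hb : b = c * (c ^ 2 + y - 2) / (2 * (c - 1) * (c - 2) * ((c - 1) ^ 2 + 1))) :
    b^2*c^4 - 5*b^2*c^3 + 10*b^2*c^2 - 10*b^2*c + 4*b^2 + 2*b*c + 2*c^2 - b*c^3 = 0 := by
  have hroot : b = (-(2 * c - c ^ 3) + c * y) / (2 * ((c - 1) * (c - 2) * ((c - 1) ^ 2 + 1))) := by
    rw [hb]; ring
  have hquad :=
    (quadratic_eq_zero_iff (sub_one_mul_sub_two_mul_ne_zero hc1 hc2) (discrim_eq_of_curve hy) b).2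
      (Or.inl hroot)
  linear_combination hquad

end CurveRoot

theorem stmt_8_general (y c b E03 : ℚ)
    (hy : y^2 = -7*c^4 + 40*c^3 - 84*c^2 + 80*c - 28)
    (hc1 : c ≠ 1) (hc2 : c ≠ 2)
    (hb : b = c*(c^2 + y - 2) / (2*(c - 1)*(c - 2)*((c - 1)^2 + 1)))
    (hE03 : E03 = (b/2)
        * (b^2*c^4 - 5*b^2*c^3 + 10*b^2*c^2 - 10*b^2*c + 4*b^2 + 2*b*c + 2*c^2 - b*c^3)
        * (2*b^2*c^4 - 12*b^2*c^3 + 26*b^2*c^2 - 24*b^2*c + 8*b^2 - b*c^4 + 3*b*c^3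
            - 6*b*c + 4*b + c^3 - 2*c^2 + 2*c)
        * (b^2*c^4 - 6*b^2*c^3 + 13*b^2*c^2 - 12*b^2*c + 4*b^2 + c^2)⁻¹
        * ((b*c - 1 - b)^2)⁻¹ * ((b*c - c - 2*b)^2)⁻¹) :
    E03 = 0 := by
  rw [hE03, quadratic_factor_eq_zero_of_curve hy hc1 hc2 hb]
  ring

theorem stmt_8 (y c b E03 : ℚ)
    (hy : y^2 = -7*c^4 + 40*c^3 - 84*c^2 + 80*c - 28)
    (hc1 : c ≠ 1) (hc2 : c ≠ 2)
    (hb : b = c*(c^2 + y - 2) / (2*(c - 1)*(c - 2)*((c - 1)^2 + 1)))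
    (hnd : (b^2*c^4 - 6*b^2*c^3 + 13*b^2*c^2 - 12*b^2*c + 4*b^2 + c^2)
           * (b*c - 1 - b) * (b*c - c - 2*b) ≠ 0)
    (hE03 : E03 = (b/2)
        * (b^2*c^4 - 5*b^2*c^3 + 10*b^2*c^2 - 10*b^2*c + 4*b^2 + 2*b*c + 2*c^2 - b*c^3)
        * (2*b^2*c^4 - 12*b^2*c^3 + 26*b^2*c^2 - 24*b^2*c + 8*b^2 - b*c^4 + 3*b*c^3
            - 6*b*c + 4*b + c^3 - 2*c^2 + 2*c)
        * (b^2*c^4 - 6*b^2*c^3 + 13*b^2*c^2 - 12*b^2*c + 4*b^2 + c^2)⁻¹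
        * ((b*c - 1 - b)^2)⁻¹ * ((b*c - c - 2*b)^2)⁻¹) :
    E03 = 0 :=
  stmt_8_general y c b E03 hy hc1 hc2 hb hE03
end

section
/- Let y, c be rational numbers with y² = c⁴ − 8c³ + 12c² − 16c + 4, c ≠ 1, c ≠ 2, and set b = (c² + y − 2)/(4(c − 2)(c − 1)). Assume the nondegeneracy condition (b²c⁴ − 6b²c³ + 13b²c² − 12b²c + 4b² + c²)·(bc − 1 − b)·(bc − c − 2b)·(b²c² + 2b² − 3b²c + c − bc² + 2b) ≠ 0. Then x = 1 is a root of the cubic x³ − E₁₀x² + E₂₀x − E₃₀ = 0, i.e. 1 − E₁₀ + E₂₀ − E₃₀ = 0, where E₁₀, E₂₀, E₃₀ are given by the formulas in the context. In particular this cubic polynomial is divisible by (x − 1) over ℚ. -/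
/-!
The defining formula for `b` is the quadratic formula: since the discriminant of
`2 (c-1)² (c-2)² X² - (c-1)(c-2)(c²-2) X + c (c²-2c+2)` is `(c-1)²(c-2)²` times the quartic
of the curve, a point `(c, y)` of the curve makes `b` a root of this quadratic. After clearing
denominators, `1 - E₁₀ + E₂₀ - E₃₀` becomes a polynomial multiple of `b²` times the quadratic;
the extra factor `b` also covers `c ∈ {1, 2}`, where the division defining `b` returns `0`.
-/

namespace CubicRootOne

variable {K : Type*} [Field K]

def E₁₀ (b c : K) : K :=
  -(b^2*c^2 + 2*b^2 - 3*b^2*c - c) / (b^2*c^2 + 2*b^2 - 3*b^2*c + c - b*c^2 + 2*b)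

def E₂₀ (b c : K) : K :=
  (b/2) * (b*c^2 - 2*c - 2*b) * (2*b*c^2 - c^2 - 6*b*c + 2 + 4*b)
    * ((b*c - 1 - b)^2)⁻¹ * ((b*c - c - 2*b)^2)⁻¹

def E₃₀ (b c : K) : K :=
  c * b^2 * (1 - c) * (c - 2) * (b*c^2 - 4*b*c + 2 + 4*b) * (2*b*c^2 - c^2 - 4*b*c + 2*b)
    * (b^2*c^4 - 6*b^2*c^3 + 13*b^2*c^2 - 12*b^2*c + 4*b^2 + c^2)⁻¹
    * ((b*c - 1 - b)^2)⁻¹ * ((b*c - c - 2*b)^2)⁻¹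

theorem quadratic_eq_zero_of_curve (h2 : (2 : K) ≠ 0) {y c b : K}
    (hy : y^2 = c^4 - 8*c^3 + 12*c^2 - 16*c + 4)
    (hb : b * (4*(c - 2)*(c - 1)) = c^2 + y - 2) :
    2*(c-1)^2*(c-2)^2*b^2 - (c-1)*(c-2)*(c^2-2)*b + c*(c^2-2*c+2) = 0 := by
  have h8 : (8 : K) ≠ 0 := by simpa [show (8 : K) = 2 ^ 3 by norm_num] using pow_ne_zero 3 h2
  apply mul_left_cancel₀ h8
  linear_combination hy + (y + 4*(c-2)*(c-1)*b - c^2 + 2)*hb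

theorem mul_quadratic_eq_zero (h2 : (2 : K) ≠ 0) {y c b : K}
    (hy : y^2 = c^4 - 8*c^3 + 12*c^2 - 16*c + 4)
    (hb : b = (c^2 + y - 2) / (4*(c - 2)*(c - 1))) :
    b * (2*(c-1)^2*(c-2)^2*b^2 - (c-1)*(c-2)*(c^2-2)*b + c*(c^2-2*c+2)) = 0 := by
  by_cases hd : 4*(c - 2)*(c - 1) = 0
  · rw [hd, div_zero] at hb
    rw [hb, zero_mul]
  · rw [eq_div_iff hd] at hb
    rw [quadratic_eq_zero_of_curve h2 hy hb, mul_zero]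

theorem one_sub_E₁₀_add_E₂₀_sub_E₃₀_eq_zero (h2 : (2 : K) ≠ 0) {b c : K}
    (hQ : b^2*c^4 - 6*b^2*c^3 + 13*b^2*c^2 - 12*b^2*c + 4*b^2 + c^2 ≠ 0)
    (hP₁ : b*c - 1 - b ≠ 0) (hP₂ : b*c - c - 2*b ≠ 0)
    (hD : b^2*c^2 + 2*b^2 - 3*b^2*c + c - b*c^2 + 2*b ≠ 0)
    (hR : b * (2*(c-1)^2*(c-2)^2*b^2 - (c-1)*(c-2)*(c^2-2)*b + c*(c^2-2*c+2)) = 0) :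
    1 - E₁₀ b c + E₂₀ b c - E₃₀ b c = 0 := by
  unfold E₁₀ E₂₀ E₃₀
  field_simp at hQ hP₂ hD
  field_simp
  linear_combination (2*b*c^2 - 2*b*c^3 + b*c^4 + 8*b^2*c - 10*b^2*c^2 + 5*b^2*c^4
    - 2*b^2*c^5 + 8*b^3 - 38*b^3*c^2 + 48*b^3*c^3 - 19*b^3*c^4 + b^3*c^6 + 24*b^4 - 72*b^4*c
    + 66*b^4*c^2 - 33*b^4*c^4 + 18*b^4*c^5 - 3*b^4*c^6 + 16*b^5 - 72*b^5*c + 132*b^5*c^2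
    - 126*b^5*c^3 + 66*b^5*c^4 - 18*b^5*c^5 + 2*b^5*c^6) * hR

end CubicRootOne

theorem stmt_9_general (y c b E10 E20 E30 : ℚ)
    (hy : y^2 = c^4 - 8*c^3 + 12*c^2 - 16*c + 4)
    (hb : b = (c^2 + y - 2) / (4*(c - 2)*(c - 1)))
    (hnd : (b^2*c^4 - 6*b^2*c^3 + 13*b^2*c^2 - 12*b^2*c + 4*b^2 + c^2)
           * (b*c - 1 - b) * (b*c - c - 2*b)
           * (b^2*c^2 + 2*b^2 - 3*b^2*c + c - b*c^2 + 2*b) ≠ 0)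
    (hE10 : E10 = -(b^2*c^2 + 2*b^2 - 3*b^2*c - c)
                   / (b^2*c^2 + 2*b^2 - 3*b^2*c + c - b*c^2 + 2*b))
    (hE20 : E20 = (b/2) * (b*c^2 - 2*c - 2*b) * (2*b*c^2 - c^2 - 6*b*c + 2 + 4*b)
                   * ((b*c - 1 - b)^2)⁻¹ * ((b*c - c - 2*b)^2)⁻¹)
    (hE30 : E30 = c * b^2 * (1 - c) * (c - 2) * (b*c^2 - 4*b*c + 2 + 4*b)
                   * (2*b*c^2 - c^2 - 4*b*c + 2*b)
                   * (b^2*c^4 - 6*b^2*c^3 + 13*b^2*c^2 - 12*b^2*c + 4*b^2 + c^2)⁻¹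
                   * ((b*c - 1 - b)^2)⁻¹ * ((b*c - c - 2*b)^2)⁻¹) :
    (1 : ℚ) - E10 + E20 - E30 = 0 := by
  obtain ⟨⟨⟨hQ, hP₁⟩, hP₂⟩, hD⟩ := by simpa only [ne_eq, mul_eq_zero, not_or] using hnd
  subst hE10 hE20 hE30
  exact CubicRootOne.one_sub_E₁₀_add_E₂₀_sub_E₃₀_eq_zero two_ne_zero hQ hP₁ hP₂ hD
    (CubicRootOne.mul_quadratic_eq_zero two_ne_zero hy hb)

theorem stmt_9 (y c b E10 E20 E30 : ℚ)
    (hy : y^2 = c^4 - 8*c^3 + 12*c^2 - 16*c + 4)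
    (hc1 : c ≠ 1) (hc2 : c ≠ 2)
    (hb : b = (c^2 + y - 2) / (4*(c - 2)*(c - 1)))
    (hnd : (b^2*c^4 - 6*b^2*c^3 + 13*b^2*c^2 - 12*b^2*c + 4*b^2 + c^2)
           * (b*c - 1 - b) * (b*c - c - 2*b)
           * (b^2*c^2 + 2*b^2 - 3*b^2*c + c - b*c^2 + 2*b) ≠ 0)
    (hE10 : E10 = -(b^2*c^2 + 2*b^2 - 3*b^2*c - c)
                   / (b^2*c^2 + 2*b^2 - 3*b^2*c + c - b*c^2 + 2*b))
    (hE20 : E20 = (b/2) * (b*c^2 - 2*c - 2*b) * (2*b*c^2 - c^2 - 6*b*c + 2 + 4*b)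
                   * ((b*c - 1 - b)^2)⁻¹ * ((b*c - c - 2*b)^2)⁻¹)
    (hE30 : E30 = c * b^2 * (1 - c) * (c - 2) * (b*c^2 - 4*b*c + 2 + 4*b)
                   * (2*b*c^2 - c^2 - 4*b*c + 2*b)
                   * (b^2*c^4 - 6*b^2*c^3 + 13*b^2*c^2 - 12*b^2*c + 4*b^2 + c^2)⁻¹
                   * ((b*c - 1 - b)^2)⁻¹ * ((b*c - c - 2*b)^2)⁻¹) :
    (1 : ℚ) - E10 + E20 - E30 = 0 :=
  stmt_9_general y c b E10 E20 E30 hy hb hnd hE10 hE20 hE30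
end

section
/- Let b, c be rational numbers with D = b²c² + 2b² − 3b²c + c − bc² + 2b ≠ 0, and define E₁₁ = −b(c² + 2 − 4c)/D, E₀₁ = −b(c² + 2 − 2c)/D, and E₁₀ = −(b²c² + 2b² − 3b²c − c)/D. Then (2E₁₁)² + (E₀₁² + 1 − E₁₀²)² − 8E₀₁² = 0. -/
/-!
Write `E₀₁ = P₀₁/D`, `E₁₀ = P₁₀/D`. The numerators satisfy `P₀₁² + D² − P₁₀² = 2b(2 − c²)·D`,
so the middle term `E₀₁² + 1 − E₁₀²` is `2b(2 − c²)/D` and every term of the cuboid equation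
carries the common factor `4b²/D²`. What remains is
`(c² − 4c + 2)² + (c² − 2)² = 2(c² − 2c + 2)²`, i.e. the Pythagorean triple
`(m² − 1)² + (2m)² = (m² + 1)²` at `m = c − 1` in disguise.
-/

section CommRing

variable {R : Type*} [CommRing R]

theorem quadratic_sq_add_sq_eq_two_mul_sq (c : R) :
    (c^2 - 4*c + 2)^2 + (c^2 - 2)^2 = 2*(c^2 - 2*c + 2)^2 := by
  ring

theorem cuboid_numerator_identity (b c : R) :
    (b*(c^2 + 2 - 2*c))^2 + (b^2*c^2 + 2*b^2 - 3*b^2*c + c - b*c^2 + 2*b)^2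
        - (b^2*c^2 + 2*b^2 - 3*b^2*c - c)^2
      = 2*b*(2 - c^2) * (b^2*c^2 + 2*b^2 - 3*b^2*c + c - b*c^2 + 2*b) := by
  ring

end CommRing

theorem cuboid_middle_term {K : Type*} [Field K] (b c D : K)
    (hD : D = b^2*c^2 + 2*b^2 - 3*b^2*c + c - b*c^2 + 2*b) (hD0 : D ≠ 0) :
    (-(b*(c^2 + 2 - 2*c)) / D)^2 + 1 - (-(b^2*c^2 + 2*b^2 - 3*b^2*c - c) / D)^2
      = 2*b*(2 - c^2) / D := by
  field_simp
  subst hD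
  linear_combination cuboid_numerator_identity b c

theorem stmt_15 (b c D E11 E01 E10 : ℚ)
    (hD : D = b^2*c^2 + 2*b^2 - 3*b^2*c + c - b*c^2 + 2*b) (hD0 : D ≠ 0)
    (hE11 : E11 = -(b*(c^2 + 2 - 4*c)) / D)
    (hE01 : E01 = -(b*(c^2 + 2 - 2*c)) / D)
    (hE10 : E10 = -(b^2*c^2 + 2*b^2 - 3*b^2*c - c) / D) :
    (2*E11)^2 + (E01^2 + 1 - E10^2)^2 - 8*E01^2 = 0 := by
  have hmiddle : E01^2 + 1 - E10^2 = 2*b*(2 - c^2) / D := by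
    rw [hE01, hE10]
    exact cuboid_middle_term b c D hD hD0
  rw [hmiddle, hE11, hE01]
  field_simp
  linear_combination 4*b^2 * quadratic_sq_add_sq_eq_two_mul_sq c
end
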